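/- arXiv:2506.07622 — 4 statements merged into one kernel-verified Lean document; each statement's English description precedes it below -/
import Mathlib

section
/- Let Π be a symmetric (1+ℓ)×(1+ℓ) real matrix partitioned with Π₁₁ ∈ ℝ, Π₂₂ ∈ ℝ^{ℓ×ℓ}, such that Π₂₂ is negative definite and the Schur complement Π₁₁ - Π₁₂Π₂₂⁻¹Π₂₁ ≥ 0. Then the set Z(Π) = { v ∈ ℝ^ℓ : [1; v]ᵀ Π [1; v] ≥ 0 } is nonempty, convex, and bounded. -/
/-!
Since `P22` is invertible and symmetric, completing the square around `v₀ = P22⁻¹ P21` gives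
`P11 + 2 P21ᵀv + vᵀP22v = s - (v + v₀)ᵀ(-P22)(v + v₀)` with `s` the Schur complement.
Hence `Z` is the translate by `-v₀` of the sublevel set `{w | wᵀ(-P22)w ≤ s}` of a positive definite
quadratic form: it contains `-v₀` because `s ≥ 0`, it is convex because the form is convex, and it
is bounded because the form dominates `ε ‖w‖²` for the minimum `ε > 0` of the form on the unit
sphere.
-/

open Matrix

namespace Matrix

variable {n R : Type*} [Fintype n]

lemma IsSymm.dotProduct_mulVec_comm [CommSemiring R] {A : Matrix n n R} (hA : A.IsSymm)
    (v w : n → R) : v ⬝ᵥ A *ᵥ w = w ⬝ᵥ A *ᵥ v := by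
  rw [dotProduct_mulVec, ← mulVec_transpose, hA.eq, dotProduct_comm]

lemma IsSymm.complete_square [CommRing R] {A : Matrix n n R} (hA : A.IsSymm) {b v₀ : n → R}
    (hv₀ : A *ᵥ v₀ = b) (c : R) (v : n → R) :
    c + 2 * (b ⬝ᵥ v) + v ⬝ᵥ A *ᵥ v = c - b ⬝ᵥ v₀ + (v + v₀) ⬝ᵥ A *ᵥ (v + v₀) := by
  have hv₀v : v₀ ⬝ᵥ A *ᵥ v = b ⬝ᵥ v := by rw [hA.dotProduct_mulVec_comm, hv₀, dotProduct_comm]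
  have hvv₀ : v ⬝ᵥ A *ᵥ v₀ = b ⬝ᵥ v := by rw [hv₀, dotProduct_comm]
  have hv₀v₀ : v₀ ⬝ᵥ A *ᵥ v₀ = b ⬝ᵥ v₀ := by rw [hv₀, dotProduct_comm]
  simp only [mulVec_add, dotProduct_add, add_dotProduct, hv₀v, hvv₀, hv₀v₀]
  ring

lemma PosSemidef.convexOn_dotProduct_mulVec {A : Matrix n n ℝ} (hA : A.PosSemidef) :
    ConvexOn ℝ Set.univ fun v => v ⬝ᵥ A *ᵥ v := by
  refine ⟨convex_univ, fun x _ y _ a b ha hb hab => ?_⟩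
  have hsymm : A.IsSymm := isHermitian_iff_isSymm.mp hA.isHermitian
  have hxy : 0 ≤ (x - y) ⬝ᵥ A *ᵥ (x - y) := by simpa using hA.dotProduct_mulVec_nonneg (x - y)
  have hgap : a * (x ⬝ᵥ A *ᵥ x) + b * (y ⬝ᵥ A *ᵥ y)
      - (a • x + b • y) ⬝ᵥ A *ᵥ (a • x + b • y) = a * b * ((x - y) ⬝ᵥ A *ᵥ (x - y)) := by
    obtain rfl : b = 1 - a := by linarith
    simp only [mulVec_add, mulVec_smul, mulVec_sub, dotProduct_add, add_dotProduct,
      dotProduct_sub, sub_dotProduct, smul_dotProduct, dotProduct_smul, smul_eq_mul,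
      hsymm.dotProduct_mulVec_comm y x]
    ring
  simp only [smul_eq_mul]
  linarith [mul_nonneg (mul_nonneg ha hb) hxy]

lemma PosDef.exists_pos_mul_sq_norm_le {A : Matrix n n ℝ} (hA : A.PosDef) :
    ∃ ε > 0, ∀ v : n → ℝ, ε * ‖v‖ ^ 2 ≤ v ⬝ᵥ A *ᵥ v := by
  cases isEmpty_or_nonempty n
  · exact ⟨1, one_pos, fun v => by simp [Subsingleton.elim v 0]⟩
  have hcont : Continuous fun v : n → ℝ => v ⬝ᵥ A *ᵥ v := by
    simp only [dotProduct, mulVec]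
    fun_prop
  obtain ⟨u, hu, hmin⟩ := (isCompact_sphere (0 : n → ℝ) 1).exists_isMinOn
    (NormedSpace.sphere_nonempty.2 zero_le_one) hcont.continuousOn
  refine ⟨u ⬝ᵥ A *ᵥ u, by simpa using hA.dotProduct_mulVec_pos (ne_zero_of_mem_unit_sphere ⟨u, hu⟩),
    fun v => ?_⟩
  rcases eq_or_ne v 0 with rfl | hv
  · simp
  have hnorm : 0 < ‖v‖ := norm_pos_iff.2 hv
  have hmin_v : u ⬝ᵥ A *ᵥ u ≤ ‖v‖⁻¹ * (‖v‖⁻¹ * (v ⬝ᵥ A *ᵥ v)) := by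
    simpa only [Set.mem_ofPred_eq, mulVec_smul, dotProduct_smul, smul_dotProduct, smul_eq_mul]
      using hmin (a := ‖v‖⁻¹ • v) (by simp [norm_smul, hnorm.ne'])
  calc u ⬝ᵥ A *ᵥ u * ‖v‖ ^ 2 ≤ ‖v‖⁻¹ * (‖v‖⁻¹ * (v ⬝ᵥ A *ᵥ v)) * ‖v‖ ^ 2 := by gcongr
    _ = v ⬝ᵥ A *ᵥ v := by field_simp

lemma PosDef.isBounded_setOf_dotProduct_mulVec_le {A : Matrix n n ℝ} (hA : A.PosDef) (s : ℝ) :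
    Bornology.IsBounded {v | v ⬝ᵥ A *ᵥ v ≤ s} := by
  obtain ⟨ε, hε, hle⟩ := hA.exists_pos_mul_sq_norm_le
  refine (Metric.isBounded_closedBall (x := 0) (r := √(s / ε))).subset fun v hv => ?_
  have hsq : ‖v‖ ^ 2 ≤ s / ε := by
    rw [le_div_iff₀' hε]
    exact (hle v).trans hv
  simpa using Real.abs_le_sqrt hsq

end Matrix

/-- For a symmetric Π = [[P11, P21ᵀ],[P21, P22]] with P22 negative
definite and Schur complement P11 - P21ᵀP22⁻¹P21 ≥ 0, the set
Z(Π) = {v | [1;v]ᵀ Π [1;v] ≥ 0} is nonempty, convex and bounded. -/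
theorem stmt0 {l : ℕ}
    (P11 : ℝ) (P21 : Fin l → ℝ) (P22 : Matrix (Fin l) (Fin l) ℝ)
    (hP22 : (-P22).PosDef)
    (hschur : 0 ≤ P11 - P21 ⬝ᵥ P22⁻¹.mulVec P21) :
    let Z : Set (Fin l → ℝ) :=
      {v | 0 ≤ P11 + 2 * (P21 ⬝ᵥ v) + v ⬝ᵥ P22.mulVec v}
    Z.Nonempty ∧ Convex ℝ Z ∧ Bornology.IsBounded Z := by
  intro Z
  have hsymm : P22.IsSymm := by simpa using (isHermitian_iff_isSymm.mp hP22.isHermitian).neg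
  set v₀ := P22⁻¹ *ᵥ P21
  have hv₀ : P22 *ᵥ v₀ = P21 := by
    have hunit : IsUnit P22 := by simpa using hP22.isUnit.neg
    rw [mulVec_mulVec, mul_nonsing_inv _ ((isUnit_iff_isUnit_det _).1 hunit), one_mulVec]
  have hZ : Z = (· + v₀) ⁻¹' {w | w ⬝ᵥ (-P22) *ᵥ w ≤ P11 - P21 ⬝ᵥ v₀} := by
    ext v
    simp only [Z, Set.mem_ofPred_eq, Set.mem_preimage, hsymm.complete_square hv₀, neg_mulVec,
      dotProduct_neg]
    constructor <;> intro <;> linarith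
  rw [hZ]
  refine ⟨⟨-v₀, by simpa using hschur⟩, ?_, ?_⟩
  · have hconvex := hP22.posSemidef.convexOn_dotProduct_mulVec.convex_le (P11 - P21 ⬝ᵥ v₀)
    rw [Set.sep_univ] at hconvex
    exact hconvex.translate_preimage_left v₀
  · exact (isometry_add_right v₀).antilipschitz.isBounded_preimage
      (hP22.isBounded_setOf_dotProduct_mulVec_le _)
end

section
/- Let N be a symmetric (1+k)×(1+k) real matrix with N₂₂ negative definite, such that -N₂₂⁻¹N₂₁ > 0 elementwise and for all i = 1,…,k: N|N₂₂ + (eᵢᵀN₂₂⁻¹N₂₁)²/(eᵢᵀN₂₂⁻¹eᵢ) ≤ 0. Then Γ := { γ ∈ ℝ^k : [1;γ]ᵀN[1;γ] ≥ 0 } satisfies Γ ⊆ ℝ^k_{≥0}. -/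
open Matrix

/-!
Write `M = -N₂₂ ≻ 0` and `c = M⁻¹ N₂₁ = -N₂₂⁻¹ N₂₁`. Completing the square,
`[1;γ]ᵀ N [1;γ] = s - (γ - c)ᵀ M (γ - c)` with `s = N|N₂₂`, so `Γ` is the ellipsoid
`(γ - c)ᵀ M (γ - c) ≤ s` centred at `c > 0`. By Cauchy–Schwarz in the inner product of `M`,
its extent along `eᵢ` is `(γᵢ - cᵢ)² ≤ (M⁻¹)ᵢᵢ s`, and the hypothesis on `i` says exactly
`(M⁻¹)ᵢᵢ s ≤ cᵢ²`. Hence `|γᵢ - cᵢ| ≤ cᵢ`, i.e. `γᵢ ≥ 0`.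
-/

namespace Matrix

variable {n : Type*} [Fintype n]

theorem IsSymm.sub_dotProduct_mulVec_sub {R : Type*} [CommRing R] {M : Matrix n n R}
    (hM : M.IsSymm) (x c : n → R) :
    (x - c) ⬝ᵥ M *ᵥ (x - c) = x ⬝ᵥ M *ᵥ x - 2 * (M *ᵥ c ⬝ᵥ x) + c ⬝ᵥ M *ᵥ c := by
  have hcx : c ⬝ᵥ M *ᵥ x = M *ᵥ c ⬝ᵥ x := by
    rw [dotProduct_mulVec, ← mulVec_transpose, hM.eq]
  rw [mulVec_sub, dotProduct_sub, sub_dotProduct, sub_dotProduct, hcx,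
    dotProduct_comm x (M *ᵥ c)]
  ring

/-- Cauchy–Schwarz for the inner product `⟪u, v⟫ = u ⬝ᵥ M *ᵥ v`, applied to `M⁻¹ *ᵥ y` and `x`. -/
theorem PosDef.dotProduct_sq_le [DecidableEq n] {M : Matrix n n ℝ} (hM : M.PosDef)
    (x y : n → ℝ) : (y ⬝ᵥ x) ^ 2 ≤ (y ⬝ᵥ M⁻¹ *ᵥ y) * (x ⬝ᵥ M *ᵥ x) := by
  set u := M⁻¹ *ᵥ y
  have hMu : M *ᵥ u = y := by
    rw [mulVec_mulVec, mul_nonsing_inv _ ((isUnit_iff_isUnit_det M).mp hM.isUnit), one_mulVec]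
  have hux : u ⬝ᵥ M *ᵥ x = y ⬝ᵥ x := by
    rw [dotProduct_mulVec, ← mulVec_transpose, (isHermitian_iff_isSymm.mp hM.isHermitian).eq,
      hMu]
  have hxu : x ⬝ᵥ M *ᵥ u = y ⬝ᵥ x := by rw [hMu, dotProduct_comm]
  have huu : u ⬝ᵥ M *ᵥ u = y ⬝ᵥ u := by rw [hMu, dotProduct_comm]
  have hCS := LinearMap.BilinForm.apply_mul_apply_le_of_forall_zero_le (toLinearMap₂' ℝ M)
    (fun v => by simpa [toLinearMap₂'_apply'] using hM.posSemidef.dotProduct_mulVec_nonneg v) u x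
  simp only [toLinearMap₂'_apply'] at hCS
  rwa [hux, hxu, huu, ← sq] at hCS

end Matrix

/-- If N22 is negative definite, -N22⁻¹N21 > 0 elementwise, and
for all i: N|N22 + (eᵢᵀN22⁻¹N21)²/(eᵢᵀN22⁻¹eᵢ) ≤ 0, then
Γ = {γ | [1;γ]ᵀN[1;γ] ≥ 0} ⊆ ℝ^k_{≥0}. -/
theorem stmt8 {k : ℕ}
    (N11 : ℝ) (N21 : Fin k → ℝ) (N22 : Matrix (Fin k) (Fin k) ℝ)
    (hN22 : (-N22).PosDef)
    (hcenter : ∀ i, 0 < (-(N22⁻¹.mulVec N21)) i)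
    (hcond : ∀ i : Fin k,
      (N11 - N21 ⬝ᵥ N22⁻¹.mulVec N21) +
        (N22⁻¹.mulVec N21 i) ^ 2 / (N22⁻¹ i i) ≤ 0) :
    ∀ γ : Fin k → ℝ,
      0 ≤ N11 + 2 * (N21 ⬝ᵥ γ) + γ ⬝ᵥ N22.mulVec γ → ∀ i, 0 ≤ γ i := by
  intro γ hγ i
  set M := -N22 with hM_def
  have hM_unit : IsUnit M.det := (isUnit_iff_isUnit_det M).mp hN22.isUnit
  have hinv : N22⁻¹ = -M⁻¹ := inv_eq_right_inv <| by
    rw [mul_neg, ← neg_mul]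
    exact mul_nonsing_inv M hM_unit
  set c := M⁻¹ *ᵥ N21
  set s := N11 + N21 ⬝ᵥ c
  have hMc : M *ᵥ c = N21 := by
    rw [mulVec_mulVec, mul_nonsing_inv _ hM_unit, one_mulVec]
  have hc : 0 < c i := by simpa only [hinv, neg_mulVec, neg_neg] using hcenter i
  have hd : 0 < M⁻¹ i i := hN22.inv.diag_pos
  have hsd : M⁻¹ i i * s ≤ c i ^ 2 := by
    have := hcond i
    simp only [hinv, neg_mulVec, dotProduct_neg, Pi.neg_apply, Matrix.neg_apply, neg_sq,
      div_neg] at this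
    rw [← le_div_iff₀' hd]
    linarith
  have hball : (γ - c) ⬝ᵥ M *ᵥ (γ - c) ≤ s := by
    rw [(isHermitian_iff_isSymm.mp hN22.isHermitian).sub_dotProduct_mulVec_sub, hMc,
      dotProduct_comm c N21]
    simp only [hM_def, neg_mulVec, dotProduct_neg] at hγ ⊢
    linarith
  have hγc : (γ i - c i) ^ 2 ≤ c i ^ 2 :=
    calc (γ i - c i) ^ 2 = (Pi.single i 1 ⬝ᵥ (γ - c)) ^ 2 := by simp
      _ ≤ (Pi.single i 1 ⬝ᵥ M⁻¹ *ᵥ Pi.single i 1) * ((γ - c) ⬝ᵥ M *ᵥ (γ - c)) :=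
        hN22.dotProduct_sq_le _ _
      _ ≤ M⁻¹ i i * s := by simpa using mul_le_mul_of_nonneg_left hball hd.le
      _ ≤ c i ^ 2 := hsd
  linarith [(abs_le.mp (abs_le_of_sq_le_sq hγc hc.le)).1]
end

section
/- Let φ₁,…,φ_k : ℝⁿ → ℝ be convex functions and let b(z) := (φ₁(z),…,φ_k(z))ᵀ. Let M ∈ ℝ^{k×k} be positive definite and suppose M·b(z) ≥ 0 elementwise for all z ∈ ℝⁿ. Let c ≥ 0. Then the function z ↦ 2·sqrt(c · b(z)ᵀ M b(z)) is convex on ℝⁿ. -/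
/-!
For `M = Bᵀ B` the map `w ↦ √(wᵀ M w)` is the Euclidean norm of `B w`, hence convex. On the cone
`{u | 0 ≤ M u}` it is also monotone: for `u ≤ v` and `d = v - u ≥ 0`,
`vᵀ M v - uᵀ M u = 2 dᵀ M u + dᵀ M d ≥ 0`. A convex function that is monotone above every value
of a convex map `b` stays convex after composing with `b`; then scale by `2 √c`.
-/

section Composition

variable {𝕜 E : Type*} [Semiring 𝕜] [PartialOrder 𝕜] [AddCommMonoid E] [SMul 𝕜 E] {s : Set E}

theorem ConvexOn.pi {ι : Type*} {β : ι → Type*} [∀ i, AddCommMonoid (β i)]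
    [∀ i, PartialOrder (β i)] [∀ i, SMul 𝕜 (β i)] {f : ∀ i, E → β i} (hs : Convex 𝕜 s)
    (hf : ∀ i, ConvexOn 𝕜 s (f i)) :
    ConvexOn 𝕜 s (fun x i => f i x) :=
  ⟨hs, fun _ hx _ hy _ _ ha hb hab i => (hf i).2 hx hy ha hb hab⟩

variable {F β : Type*} [AddCommMonoid F] [PartialOrder F] [SMul 𝕜 F]
  [AddCommMonoid β] [PartialOrder β] [SMul 𝕜 β]

theorem ConvexOn.comp_of_map_le {g : F → β} {f : E → F} (hg : ConvexOn 𝕜 Set.univ g)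
    (hf : ConvexOn 𝕜 s f) (hg' : ∀ x ∈ s, ∀ y, f x ≤ y → g (f x) ≤ g y) :
    ConvexOn 𝕜 s (g ∘ f) :=
  ⟨hf.1, fun _ hx _ hy _ _ ha hb hab =>
    (hg' _ (hf.1 hx hy ha hb hab) _ (hf.2 hx hy ha hb hab)).trans <|
      hg.2 (Set.mem_univ _) (Set.mem_univ _) ha hb hab⟩

end Composition

namespace Matrix.PosSemidef

variable {ι : Type*} [Fintype ι] {M : Matrix ι ι ℝ}

open scoped MatrixOrder in
theorem convexOn_sqrt_dotProduct_mulVec (hM : M.PosSemidef) :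
    ConvexOn ℝ Set.univ (fun w => √(w ⬝ᵥ M *ᵥ w)) := by
  classical
  obtain ⟨B, rfl⟩ := CStarAlgebra.nonneg_iff_eq_star_mul_self.mp hM.nonneg
  have hnorm : ∀ w, √(w ⬝ᵥ (star B * B) *ᵥ w) = ‖WithLp.toLp 2 (B *ᵥ w)‖ := by
    intro w
    rw [star_eq_conjTranspose, conjTranspose_eq_transpose_of_trivial, ← mulVec_mulVec,
      dotProduct_mulVec, vecMul_transpose, EuclideanSpace.norm_eq]
    simp only [Real.norm_eq_abs, sq, abs_mul_abs_self, dotProduct]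
  simp_rw [hnorm]
  exact (convexOn_norm convex_univ).comp_linearMap
    ((WithLp.linearEquiv 2 ℝ (ι → ℝ)).symm.toLinearMap ∘ₗ B.mulVecLin)

theorem dotProduct_mulVec_le_of_le (hM : M.PosSemidef) {u v : ι → ℝ} (huv : u ≤ v)
    (hMu : 0 ≤ M *ᵥ u) : u ⬝ᵥ M *ᵥ u ≤ v ⬝ᵥ M *ᵥ v := by
  have hsymm : v ⬝ᵥ M *ᵥ u = u ⬝ᵥ M *ᵥ v := by
    rw [dotProduct_mulVec, ← mulVec_transpose, ← conjTranspose_eq_transpose_of_trivial,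
      hM.isHermitian.eq, dotProduct_comm]
  have hd : 0 ≤ (v - u) ⬝ᵥ M *ᵥ u := dotProduct_nonneg_of_nonneg (sub_nonneg.2 huv) hMu
  have hdd : 0 ≤ (v - u) ⬝ᵥ M *ᵥ (v - u) := by simpa using hM.dotProduct_mulVec_nonneg (v - u)
  simp only [mulVec_sub, sub_dotProduct, dotProduct_sub] at hd hdd
  linarith

theorem convexOn_sqrt_dotProduct_mulVec_comp {E : Type*} [AddCommMonoid E] [Module ℝ E]
    {s : Set E} {b : E → ι → ℝ} (hM : M.PosSemidef) (hb : ConvexOn ℝ s b)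
    (hMb : ∀ x ∈ s, 0 ≤ M *ᵥ b x) :
    ConvexOn ℝ s (fun x => √(b x ⬝ᵥ M *ᵥ b x)) :=
  hM.convexOn_sqrt_dotProduct_mulVec.comp_of_map_le hb fun x hx _ hy =>
    Real.sqrt_le_sqrt (hM.dotProduct_mulVec_le_of_le hy (hMb x hx))

end Matrix.PosSemidef

/-- If the φᵢ are convex, M is positive definite,
M·b(z) ≥ 0 elementwise for all z (where b(z) = (φ₁(z),…,φ_k(z))), and c ≥ 0,
then z ↦ 2√(c·b(z)ᵀMb(z)) is convex. -/
theorem stmt11 {n k : ℕ}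
    (φ : Fin k → (Fin n → ℝ) → ℝ)
    (hφ : ∀ i, ConvexOn ℝ Set.univ (φ i))
    (M : Matrix (Fin k) (Fin k) ℝ) (hM : M.PosDef)
    (hMb : ∀ z : Fin n → ℝ, ∀ i, 0 ≤ M.mulVec (fun j => φ j z) i)
    (c : ℝ) (hc : 0 ≤ c) :
    ConvexOn ℝ Set.univ (fun z : Fin n → ℝ =>
      2 * Real.sqrt (c * ((fun j => φ j z) ⬝ᵥ M.mulVec (fun j => φ j z)))) := by
  have hU := hM.posSemidef.convexOn_sqrt_dotProduct_mulVec_comp (ConvexOn.pi convex_univ hφ)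
    fun z _ => hMb z
  refine (hU.smul (by positivity : 0 ≤ 2 * √c)).congr fun z _ => ?_
  simp only [Real.sqrt_mul hc, smul_eq_mul, mul_assoc]
end

section
/- Let Π be a symmetric (1+T)×(1+T) matrix with Π₂₂ negative definite and Π|Π₂₂ ≥ 0. Given Y ∈ ℝ^{1×T} and Φ ∈ ℝ^{k×T} (the k×T matrix of basis evaluations), define N := [[1, Y],[0, -Φ]] Π [[1, Y],[0, -Φ]]ᵀ. Then { γ ∈ ℝ^k : ∃ W with Wᵀ ∈ Z(Π) and Y = γᵀΦ + W } = { γ ∈ ℝ^k : [1; γ]ᵀ N [1; γ] ≥ 0 }. -/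
open Matrix

noncomputable section

/-- With N = [[1, Y],[0, -Φ]] Π [[1, Y],[0, -Φ]]ᵀ, the set of
parameters γ consistent with the data, i.e. such that Y = γᵀΦ + W for some
noise W with Wᵀ ∈ Z(Π), equals {γ | [1;γ]ᵀN[1;γ] ≥ 0}. -/
theorem stmt16 {T k : ℕ}
    (P : Matrix (Fin 1 ⊕ Fin T) (Fin 1 ⊕ Fin T) ℝ) (hP : P.IsSymm)
    (hP22 : (-(P.toBlocks₂₂)).PosDef)
    (hschur : 0 ≤ (P.toBlocks₁₁ -
      P.toBlocks₁₂ * (P.toBlocks₂₂)⁻¹ * P.toBlocks₂₁) 0 0)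
    (Y : Fin T → ℝ) (Φ : Matrix (Fin k) (Fin T) ℝ)
    (N : Matrix (Fin 1 ⊕ Fin k) (Fin 1 ⊕ Fin k) ℝ)
    (hN : N = (fromBlocks 1 (Matrix.of fun _ j => Y j) 0 (-Φ) :
                Matrix (Fin 1 ⊕ Fin k) (Fin 1 ⊕ Fin T) ℝ) * P *
              (fromBlocks 1 (Matrix.of fun _ j => Y j) 0 (-Φ) :
                Matrix (Fin 1 ⊕ Fin k) (Fin 1 ⊕ Fin T) ℝ)ᵀ) :
    {γ : Fin k → ℝ | ∃ W : Fin T → ℝ,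
        0 ≤ Sum.elim 1 W ⬝ᵥ P.mulVec (Sum.elim 1 W) ∧
        Y = Matrix.vecMul γ Φ + W} =
      {γ : Fin k → ℝ | 0 ≤ Sum.elim 1 γ ⬝ᵥ N.mulVec (Sum.elim 1 γ)} := by
  subst hN
  set M : Matrix (Fin 1 ⊕ Fin k) (Fin 1 ⊕ Fin T) ℝ :=
    fromBlocks 1 (Matrix.of fun _ j => Y j) 0 (-Φ) with hM
  have key : ∀ γ : Fin k → ℝ,
      Mᵀ.mulVec (Sum.elim 1 γ) = Sum.elim (1 : Fin 1 → ℝ) (Y - Matrix.vecMul γ Φ) := by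
    intro γ
    ext (i | i) <;>
      simp [hM, Matrix.mulVec, Matrix.fromBlocks, dotProduct, Fin.sum_univ_one,
        Matrix.vecMul, Matrix.one_apply, Fin.eq_zero, mul_comm, sub_eq_neg_add, add_comm]
  have quad : ∀ γ : Fin k → ℝ,
      Sum.elim 1 γ ⬝ᵥ (M * P * Mᵀ).mulVec (Sum.elim 1 γ)
        = Sum.elim 1 (Y - Matrix.vecMul γ Φ) ⬝ᵥ
            P.mulVec (Sum.elim 1 (Y - Matrix.vecMul γ Φ)) := by
    intro γ
    rw [← Matrix.mulVec_mulVec, ← Matrix.mulVec_mulVec,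
      Matrix.dotProduct_mulVec, ← Matrix.mulVec_transpose, key]
  ext γ
  simp only [Set.mem_setOf_eq]
  constructor
  · rintro ⟨W, h0, hW⟩
    have : W = Y - Matrix.vecMul γ Φ := by rw [hW]; abel
    rw [quad, ← this]; exact h0
  · intro h
    exact ⟨Y - Matrix.vecMul γ Φ, by rw [← quad]; exact h, by abel⟩
end
end
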